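/- The constant term of the n-th fibotomic polynomial satisfies: Ψ_2(0)=0; Ψ_n(0)=p if n = 2p^α for some prime p and positive integer α; and Ψ_n(0)=1 otherwise (for n ≥ 1, n ≠ 2, n not of the form 2p^α). -/

import Mathlib

/-!
Set `c n = Ψ n (0)` for `n ≠ 2` and `c 2 = 1`. Since `Ψ 2 = X`, comparing the lowest
coefficients in `F n = ∏_{d ∣ n} Ψ d` gives `∏_{d ∣ n} c d = F n (0) = 1` for odd `n` and
`∏_{d ∣ 2m} c d = [X] F (2m) = m`. The claimed values satisfy the same divisor-product
identities, the even case being `m = ∏ minFac q` over the prime-power divisors `q` of `m`.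
As they are nonzero, strong induction over the divisors shows that such identities determine
a function.
-/

open Polynomial

/-- The Fibonacci polynomials: `F 1 = 1`, `F 2 = X`, `F (n+2) = X * F (n+1) + F n`. -/
noncomputable def fibPoly : ℕ → Polynomial ℤ
  | 0 => 0
  | 1 => 1
  | n + 2 => X * fibPoly (n + 1) + fibPoly n

open Finset

theorem prod_divisors_minFac_of_isPrimePow {n : ℕ} (hn : n ≠ 0) :
    ∏ d ∈ n.divisors, (if IsPrimePow d then d.minFac else 1) = n := by
  induction n using Nat.recOnPrimeCoprime with
  | zero => exact absurd rfl hn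
  | prime_pow p k hp =>
    rw [Nat.prod_divisors_prime_pow hp, prod_range_succ', pow_zero, if_neg not_isPrimePow_one,
      mul_one, prod_congr rfl fun i _ => if_pos (hp.isPrimePow.pow i.succ_ne_zero),
      prod_congr rfl fun i _ => hp.pow_minFac i.succ_ne_zero, prod_const, card_range]
  | coprime a b _ _ hab iha ihb =>
    rw [← prod_filter, Nat.mul_divisors_filter_prime_pow hab, filter_union,
      prod_union (Nat.disjoint_divisors_filter_isPrimePow hab), prod_filter, prod_filter,
      iha (left_ne_zero_of_mul hn), ihb (right_ne_zero_of_mul hn)]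

theorem eq_of_prod_divisors_eq {M : Type*} [CommMonoidWithZero M] [IsCancelMulZero M]
    [Nontrivial M] {f g : ℕ → M}
    (hg : ∀ n, 0 < n → g n ≠ 0)
    (h : ∀ n, 0 < n → ∏ d ∈ n.divisors, f d = ∏ d ∈ n.divisors, g d) {n : ℕ} (hn : 0 < n) :
    f n = g n := by
  induction n using Nat.strong_induction_on with
  | _ n ih =>
  have hproper : ∏ d ∈ n.properDivisors, f d = ∏ d ∈ n.properDivisors, g d :=
    prod_congr rfl fun d hd =>
      ih d (Nat.mem_properDivisors.1 hd).2 (Nat.pos_of_mem_properDivisors hd)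
  have hn' := h n hn
  rw [← Nat.cons_self_properDivisors hn.ne', prod_cons, prod_cons, hproper] at hn'
  exact mul_right_cancel₀
    (prod_ne_zero_iff.2 fun d hd => hg d (Nat.pos_of_mem_properDivisors hd)) hn'

theorem fibPoly_coeff_zero (n : ℕ) : (fibPoly n).coeff 0 = (n % 2 : ℕ) := by
  induction n using Nat.twoStepInduction with
  | zero => simp [fibPoly]
  | one => simp [fibPoly]
  | more n ih _ => rw [fibPoly, coeff_add, coeff_X_mul_zero, zero_add, ih, Nat.add_mod_right]

theorem fibPoly_coeff_one_two_mul (m : ℕ) : (fibPoly (2 * m)).coeff 1 = m := by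
  induction m with
  | zero => simp [fibPoly]
  | succ m ih =>
    rw [mul_add_one, fibPoly, coeff_add, coeff_X_mul, fibPoly_coeff_zero, ih,
      Nat.mul_add_mod_self_left]
    push_cast
    ring

/-- The claimed value of `Ψ n` at `0`, except at `n = 2` (where `Ψ 2 = X`): there it is `1`,
which keeps every value nonzero. -/
def fibotomicConst (n : ℕ) : ℤ :=
  if 2 ∣ n ∧ IsPrimePow (n / 2) then (n / 2).minFac else 1

theorem fibotomicConst_ne_zero (n : ℕ) : fibotomicConst n ≠ 0 := by
  unfold fibotomicConst
  split_ifs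
  · exact_mod_cast (Nat.minFac_pos _).ne'
  · exact one_ne_zero

theorem fibotomicConst_two_mul (m : ℕ) :
    fibotomicConst (2 * m) = if IsPrimePow m then m.minFac else 1 := by
  simp [fibotomicConst]

theorem fibotomicConst_two_mul_prime_pow {p α : ℕ} (hp : p.Prime) (hα : 0 < α) :
    fibotomicConst (2 * p ^ α) = p := by
  rw [fibotomicConst_two_mul, if_pos (hp.isPrimePow.pow hα.ne'), hp.pow_minFac hα.ne']

theorem fibotomicConst_eq_one {n : ℕ} (hn : ¬∃ p α : ℕ, p.Prime ∧ 0 < α ∧ n = 2 * p ^ α) :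
    fibotomicConst n = 1 := by
  rw [fibotomicConst, if_neg]
  rintro ⟨⟨m, rfl⟩, hm⟩
  obtain ⟨p, α, hp, hα, rfl⟩ := (isPrimePow_nat_iff _).1 (by simpa using hm)
  exact hn ⟨p, α, hp, hα, rfl⟩

theorem prod_divisors_fibotomicConst {n : ℕ} (hn : n ≠ 0) :
    ∏ d ∈ n.divisors, fibotomicConst d = if 2 ∣ n then ((n / 2 : ℕ) : ℤ) else 1 := by
  split_ifs with h2
  · obtain ⟨m, rfl⟩ := h2
    have hm : m ≠ 0 := right_ne_zero_of_mul hn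
    have hsub : m.divisors.image (2 * ·) ⊆ (2 * m).divisors := by
      simp only [subset_iff, mem_image, Nat.mem_divisors]
      rintro _ ⟨q, ⟨hq, -⟩, rfl⟩
      exact ⟨mul_dvd_mul_left 2 hq, hn⟩
    have hone : ∀ d ∈ (2 * m).divisors, d ∉ m.divisors.image (2 * ·) →
        fibotomicConst d = 1 := by
      rintro d hd hd'
      rw [fibotomicConst, if_neg]
      rintro ⟨⟨q, rfl⟩, -⟩
      refine hd' (mem_image.2 ⟨q, Nat.mem_divisors.2 ⟨?_, hm⟩, rfl⟩)
      exact (Nat.mul_dvd_mul_iff_left two_pos).1 (Nat.dvd_of_mem_divisors hd)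
    rw [← prod_subset hsub hone, prod_image fun _ _ _ _ => Nat.eq_of_mul_eq_mul_left two_pos]
    simp only [fibotomicConst_two_mul, Nat.mul_div_cancel_left m two_pos]
    exact_mod_cast prod_divisors_minFac_of_isPrimePow hm
  · refine prod_eq_one fun d hd => fibotomicConst_eq_one ?_
    rintro ⟨p, α, -, -, rfl⟩
    exact h2 ((dvd_mul_right 2 _).trans (Nat.dvd_of_mem_divisors hd))

section fibotomic

variable {Ψ : ℕ → Polynomial ℤ}

theorem fibotomic_two_eq_X
    (hΨprod : ∀ n, 1 ≤ n → fibPoly n = ∏ d ∈ n.divisors, Ψ d) : Ψ 2 = X := by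
  have h1 := hΨprod 1 le_rfl
  have h2 := hΨprod 2 one_le_two
  rw [Nat.divisors_one, prod_singleton] at h1
  rw [Nat.prime_two.divisors, prod_pair (by decide), ← h1] at h2
  simpa [fibPoly] using h2.symm

theorem prod_divisors_fibotomic_eval_zero
    (hΨprod : ∀ n, 1 ≤ n → fibPoly n = ∏ d ∈ n.divisors, Ψ d) {n : ℕ} (hn : 1 ≤ n) :
    ∏ d ∈ n.divisors, (if d = 2 then 1 else (Ψ d).eval 0) =
      if 2 ∣ n then ((n / 2 : ℕ) : ℤ) else 1 := by
  split_ifs with h2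
  · obtain ⟨m, rfl⟩ := h2
    have h2mem : 2 ∈ (2 * m).divisors := Nat.mem_divisors.2 ⟨dvd_mul_right 2 m, by omega⟩
    have hcoeff : (fibPoly (2 * m)).coeff 1 =
        (X * ∏ d ∈ (2 * m).divisors.erase 2, Ψ d).coeff (0 + 1) := by
      rw [hΨprod _ hn, ← mul_prod_erase _ _ h2mem, fibotomic_two_eq_X hΨprod]
    rw [coeff_X_mul, coeff_zero_eq_eval_zero, eval_prod, fibPoly_coeff_one_two_mul] at hcoeff
    rw [← mul_prod_erase _ _ h2mem, if_pos rfl, one_mul, Nat.mul_div_cancel_left m two_pos,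
      hcoeff]
    exact prod_congr rfl fun d hd => if_neg (ne_of_mem_erase hd)
  · have h0 : (fibPoly n).coeff 0 = ∏ d ∈ n.divisors, (Ψ d).eval 0 := by
      rw [hΨprod n hn, coeff_zero_eq_eval_zero, eval_prod]
    rw [fibPoly_coeff_zero, Nat.two_dvd_ne_zero.1 h2, Nat.cast_one] at h0
    rw [h0]
    refine prod_congr rfl fun d hd => if_neg ?_
    rintro rfl
    exact h2 (Nat.dvd_of_mem_divisors hd)

theorem fibotomic_eval_zero (hΨprod : ∀ n, 1 ≤ n → fibPoly n = ∏ d ∈ n.divisors, Ψ d)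
    {n : ℕ} (hn : 1 ≤ n) (hn2 : n ≠ 2) :
    (Ψ n).eval 0 = fibotomicConst n := by
  have h := eq_of_prod_divisors_eq (fun n _ => fibotomicConst_ne_zero n) (fun n hn => by
    rw [prod_divisors_fibotomic_eval_zero hΨprod hn, prod_divisors_fibotomicConst hn.ne']) hn
  rwa [if_neg hn2] at h

end fibotomic

theorem fibotomic_constant_term_general
    (Ψ : ℕ → Polynomial ℤ)
    (hΨprod : ∀ n, 1 ≤ n → fibPoly n = ∏ d ∈ n.divisors, Ψ d) :
    (Ψ 2).eval 0 = 0 ∧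
    (∀ n p α : ℕ, p.Prime → 0 < α → n = 2 * p ^ α → (Ψ n).eval 0 = p) ∧
    (∀ n : ℕ, 1 ≤ n → n ≠ 2 → (¬∃ p α : ℕ, p.Prime ∧ 0 < α ∧ n = 2 * p ^ α) →
      (Ψ n).eval 0 = 1) := by
  refine ⟨by simp [fibotomic_two_eq_X hΨprod], ?_, fun n hn hn2 h => ?_⟩
  · rintro n p α hp hα rfl
    have hpα : 2 ≤ p ^ α := Nat.one_lt_pow hα.ne' hp.one_lt
    rw [fibotomic_eval_zero hΨprod (by omega) (by omega), fibotomicConst_two_mul_prime_pow hp hα]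
  · rw [fibotomic_eval_zero hΨprod hn hn2, fibotomicConst_eq_one h]

theorem fibotomic_constant_term
    (Ψ : ℕ → Polynomial ℤ) (hΨ1 : Ψ 1 = 1)
    (hΨmonic : ∀ n, 1 ≤ n → (Ψ n).Monic)
    (hΨprod : ∀ n, 1 ≤ n → fibPoly n = ∏ d ∈ n.divisors, Ψ d) :
    (Ψ 2).eval 0 = 0 ∧
    (∀ n p α : ℕ, p.Prime → 0 < α → n = 2 * p ^ α → (Ψ n).eval 0 = p) ∧
    (∀ n : ℕ, 1 ≤ n → n ≠ 2 → (¬∃ p α : ℕ, p.Prime ∧ 0 < α ∧ n = 2 * p ^ α) →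
      (Ψ n).eval 0 = 1) :=
  fibotomic_constant_term_general Ψ hΨprod
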